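/- arXiv:2603.19110 — 2 statements merged into one kernel-verified Lean document; each statement's English description precedes it below -/
import Mathlib

section
/- Let n ≥ 1 and p ∈ [0,1]. If e and f are independent random vectors in F₂^{2n}, each distributed according to D_p^{⊗n}, then the probability that their symplectic inner product vanishes satisfies Pr[e ⊙ f = 0] = 1/2 + (1/2)·(1 − (4/3)p²)ⁿ. -/
open scoped BigOperators Classical

/-- The symplectic inner product on `F₂^{2n}` (coordinates indexed by `Fin n ⊕ Fin n`). -/
def symp {n : ℕ} (u v : (Fin n ⊕ Fin n) → ZMod 2) : ZMod 2 :=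
  ∑ i : Fin n, (u (Sum.inl i) * v (Sum.inr i) + u (Sum.inr i) * v (Sum.inl i))

/-- Probability of a single pair under the depolarizing distribution `D_p`. -/
noncomputable def pairProb (p : ℝ) (a b : ZMod 2) : ℝ :=
  if a = 0 ∧ b = 0 then 1 - p else p / 3

/-- Density of the depolarizing distribution `D_p^{⊗n}` on `F₂^{2n}`. -/
noncomputable def depDensity (p : ℝ) (n : ℕ) (e : (Fin n ⊕ Fin n) → ZMod 2) : ℝ :=
  ∏ j : Fin n, pairProb p (e (Sum.inl j)) (e (Sum.inr j))

noncomputable def chi (x : ZMod 2) : ℝ := if x = 0 then 1 else -1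

lemma chi_add (x y : ZMod 2) : chi (x + y) = chi x * chi y := by
  fin_cases x <;> fin_cases y <;> norm_num [chi] <;> split_ifs <;> simp_all [ZMod]

lemma chi_sum {ι : Type*} (s : Finset ι) (t : ι → ZMod 2) :
    chi (∑ j ∈ s, t j) = ∏ j ∈ s, chi (t j) := by
  classical
  induction s using Finset.cons_induction with
  | empty => simp [chi]
  | cons a s ha ih => rw [Finset.sum_cons, Finset.prod_cons, chi_add, ih]

lemma indicator_eq (x : ZMod 2) : (if x = 0 then (1:ℝ) else 0) = 1/2 + 1/2 * chi x := by
  fin_cases x <;> norm_num [chi] <;> split_ifs <;> simp_all <;> norm_num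

lemma sum_zmod2 (f : ZMod 2 → ℝ) : ∑ x : ZMod 2, f x = f 0 + f 1 :=
  Fin.sum_univ_two f

lemma sum_prod_fn {β : Type*} [Fintype β] (n : ℕ) (F : β → ℝ) :
    ∑ g : Fin n → β, ∏ j, F (g j) = (∑ x, F x) ^ n := by
  classical
  rw [← Fintype.piFinset_univ, ← Finset.prod_univ_sum]
  simp

lemma double_sum_prod {β : Type*} [Fintype β] (n : ℕ) (G : β → β → ℝ) :
    ∑ g : Fin n → β, ∑ h : Fin n → β, ∏ j, G (g j) (h j)
      = (∑ x, ∑ y, G x y) ^ n := by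
  classical
  rw [← Fintype.sum_prod_type' (f := fun g h : Fin n → β => ∏ j, G (g j) (h j))]
  have he := Equiv.sum_comp (Equiv.arrowProdEquivProdArrow (Fin n) (fun _ => β) (fun _ => β))
    (fun q : (Fin n → β) × (Fin n → β) => ∏ j, G (q.1 j) (q.2 j))
  rw [← he]
  have h2 : ∑ k : Fin n → β × β, ∏ j, G (k j).1 (k j).2
      = (∑ z : β × β, G z.1 z.2) ^ n := sum_prod_fn n (fun z : β × β => G z.1 z.2)
  rw [← Fintype.sum_prod_type' (f := fun x y : β => G x y)]
  simpa [Equiv.arrowProdEquivProdArrow] using h2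

lemma key (p : ℝ) :
    ∑ x : ZMod 2 × ZMod 2, ∑ y : ZMod 2 × ZMod 2,
      pairProb p x.1 x.2 * pairProb p y.1 y.2 * chi (x.1 * y.2 + x.2 * y.1)
      = 1 - 4/3 * p^2 := by
  rw [Fintype.sum_prod_type]
  simp only [Fintype.sum_prod_type, sum_zmod2]
  simp only [pairProb, chi]
  norm_num [show ((1:ZMod 2) + 1 : ZMod 2) = 0 from rfl, show ((0:ZMod 2) + 0 : ZMod 2) = 0 from rfl,
    show ((1:ZMod 2) * 1 : ZMod 2) = 1 from rfl, show ¬((1:ZMod 2) = 0) from by decide]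
  rw [if_pos (show (2:ZMod 2) = 0 by decide)]
  ring

lemma sum_pairProb (p : ℝ) :
    ∑ z : ZMod 2 × ZMod 2, pairProb p z.1 z.2 = 1 := by
  rw [Fintype.sum_prod_type]
  simp only [sum_zmod2]
  norm_num [pairProb]
  ring

/-- If `e, f` are independent, each distributed according to `D_p^{⊗n}`, then
`Pr[e ⊙ f = 0] = 1/2 + (1/2)(1 - (4/3)p²)ⁿ`. -/
theorem stmt1 (n : ℕ) (hn : 1 ≤ n) (p : ℝ) (hp0 : 0 ≤ p) (hp1 : p ≤ 1) :
    (∑ e : (Fin n ⊕ Fin n) → ZMod 2, ∑ f : (Fin n ⊕ Fin n) → ZMod 2,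
        depDensity p n e * depDensity p n f * (if symp e f = 0 then 1 else 0))
      = 1 / 2 + (1 / 2) * (1 - (4 / 3) * p ^ 2) ^ n := by
  classical
  let E : ((Fin n ⊕ Fin n) → ZMod 2) ≃ (Fin n → ZMod 2 × ZMod 2) :=
  { toFun := fun e j => (e (Sum.inl j), e (Sum.inr j))
    invFun := fun g => Sum.elim (fun j => (g j).1) (fun j => (g j).2)
    left_inv := fun e => by funext i; cases i <;> rfl
    right_inv := fun g => rfl }
  have hsum : ∀ F : ((Fin n ⊕ Fin n) → ZMod 2) → ℝ,
      ∑ e, F e = ∑ g : Fin n → ZMod 2 × ZMod 2, F (E.symm g) :=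
    fun F => (Equiv.sum_comp E.symm F).symm
  have hD : ∀ g : Fin n → ZMod 2 × ZMod 2,
      depDensity p n (E.symm g) = ∏ j, pairProb p (g j).1 (g j).2 := fun g => rfl
  have hS : ∀ g h : Fin n → ZMod 2 × ZMod 2,
      symp (E.symm g) (E.symm h) = ∑ j, ((g j).1 * (h j).2 + (g j).2 * (h j).1) :=
    fun g h => rfl
  rw [hsum]
  have step1 : ∀ g : Fin n → ZMod 2 × ZMod 2,
      (∑ f : (Fin n ⊕ Fin n) → ZMod 2,
        depDensity p n (E.symm g) * depDensity p n f * (if symp (E.symm g) f = 0 then 1 else 0))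
      = ∑ h : Fin n → ZMod 2 × ZMod 2,
          ((∏ j, pairProb p (g j).1 (g j).2) * (∏ j, pairProb p (h j).1 (h j).2)
            * (1/2 + 1/2 * ∏ j, chi ((g j).1 * (h j).2 + (g j).2 * (h j).1))) := by
    intro g
    rw [hsum]
    refine Finset.sum_congr rfl fun h _ => ?_
    rw [hD, hD, hS, indicator_eq, chi_sum]
  rw [Finset.sum_congr rfl (fun g _ => step1 g)]
  have expand : ∀ g h : Fin n → ZMod 2 × ZMod 2,
      ((∏ j, pairProb p (g j).1 (g j).2) * (∏ j, pairProb p (h j).1 (h j).2)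
        * (1/2 + 1/2 * ∏ j, chi ((g j).1 * (h j).2 + (g j).2 * (h j).1)))
      = 1/2 * ((∏ j, pairProb p (g j).1 (g j).2) * (∏ j, pairProb p (h j).1 (h j).2))
        + 1/2 * ∏ j, (pairProb p (g j).1 (g j).2 * pairProb p (h j).1 (h j).2
            * chi ((g j).1 * (h j).2 + (g j).2 * (h j).1)) := by
    intro g h
    rw [Finset.prod_mul_distrib, Finset.prod_mul_distrib]
    ring
  simp only [expand, Finset.sum_add_distrib, ← Finset.mul_sum]
  have A : ∑ g : Fin n → ZMod 2 × ZMod 2, ∏ j, pairProb p (g j).1 (g j).2 = 1 := by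
    have h := sum_prod_fn n (fun z : ZMod 2 × ZMod 2 => pairProb p z.1 z.2)
    simp only [sum_pairProb p, one_pow] at h
    exact h
  have B : ∑ g : Fin n → ZMod 2 × ZMod 2, ∑ h : Fin n → ZMod 2 × ZMod 2,
      ∏ j, (pairProb p (g j).1 (g j).2 * pairProb p (h j).1 (h j).2
        * chi ((g j).1 * (h j).2 + (g j).2 * (h j).1))
      = (1 - 4/3 * p^2) ^ n := by
    have h := double_sum_prod n (fun x y : ZMod 2 × ZMod 2 =>
      pairProb p x.1 x.2 * pairProb p y.1 y.2 * chi (x.1 * y.2 + x.2 * y.1))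
    rw [key p] at h
    exact h
  rw [A, B]
  simp only [mul_one]
  rw [A]
  norm_num
end

section
/- Let n ≥ 1 and δ ∈ (0,1]. If A is a uniformly random full-rank isotropic matrix in F₂^{2n×n}, then the probability that the column span of A contains a nonzero vector of Hamming weight at most δ·n is at most 2^{2n·H₂(δ/2)}/(2ⁿ + 1), and in particular at most 2^{−n·(1 − 2·H₂(δ/2))}. -/
open scoped BigOperators Classical

/-- A matrix with `2n` rows is isotropic if its columns are pairwise symplectically
orthogonal. -/
def IsIsotropic {n k : ℕ} (A : Matrix (Fin n ⊕ Fin n) (Fin k) (ZMod 2)) : Prop :=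
  ∀ i j : Fin k, symp (fun r => A r i) (fun r => A r j) = 0

/-- The set of full-rank isotropic matrices in `F₂^{2n×k}`. -/
noncomputable def fullRankIso (n k : ℕ) :
    Finset (Matrix (Fin n ⊕ Fin n) (Fin k) (ZMod 2)) :=
  Finset.univ.filter fun A => A.rank = k ∧ IsIsotropic A

/-- Hamming weight of a vector over `F₂`. -/
def hWt {ι : Type*} [Fintype ι] (v : ι → ZMod 2) : ℕ :=
  (Finset.univ.filter fun i => v i ≠ 0).card

/-- The binary entropy function `H₂(x) = -x log₂ x - (1-x) log₂ (1-x)`. -/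
noncomputable def binEnt (x : ℝ) : ℝ :=
  -x * Real.logb 2 x - (1 - x) * Real.logb 2 (1 - x)

/-- The probability that the column span of a uniformly random full-rank isotropic
`A ∈ F₂^{2n×n}` contains a nonzero vector of Hamming weight at most `δ·n`. -/
noncomputable def badProb (n : ℕ) (δ : ℝ) : ℝ :=
  (((fullRankIso n n).filter fun A =>
      ∃ z : (Fin n ⊕ Fin n) → ZMod 2, z ≠ 0 ∧
        z ∈ Submodule.span (ZMod 2) (Set.range fun i : Fin n => fun r => A r i) ∧
        (hWt z : ℝ) ≤ δ * n).card : ℝ)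
    / ((fullRankIso n n).card : ℝ)

section Aux
variable {n : ℕ}

lemma symp_comm (u v : (Fin n ⊕ Fin n) → ZMod 2) : symp u v = symp v u := by
  unfold symp; apply Finset.sum_congr rfl; intro i _; ring

lemma symp_self (u : (Fin n ⊕ Fin n) → ZMod 2) : symp u u = 0 := by
  unfold symp
  apply Finset.sum_eq_zero; intro i _
  have : ∀ a : ZMod 2, a + a = 0 := by decide
  rw [mul_comm (u (Sum.inr i))]; exact this _

lemma symp_add_left (u v w : (Fin n ⊕ Fin n) → ZMod 2) :
    symp (u + v) w = symp u w + symp v w := by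
  unfold symp; rw [← Finset.sum_add_distrib]
  apply Finset.sum_congr rfl; intro i _; simp [Pi.add_apply]; ring

lemma symp_add_right (u v w : (Fin n ⊕ Fin n) → ZMod 2) :
    symp u (v + w) = symp u v + symp u w := by
  rw [symp_comm, symp_add_left, symp_comm v, symp_comm w]

lemma symp_smul_left (c : ZMod 2) (u v : (Fin n ⊕ Fin n) → ZMod 2) :
    symp (c • u) v = c * symp v u := by
  unfold symp; rw [Finset.mul_sum]
  apply Finset.sum_congr rfl; intro i _; simp [Pi.smul_apply, smul_eq_mul]; ring

lemma symp_smul_right (c : ZMod 2) (u v : (Fin n ⊕ Fin n) → ZMod 2) :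
    symp u (c • v) = c * symp u v := by
  rw [symp_comm, symp_smul_left, symp_comm]

/-- symplectic transvection -/
def tvec (v : (Fin n ⊕ Fin n) → ZMod 2) :
    ((Fin n ⊕ Fin n) → ZMod 2) →ₗ[ZMod 2] ((Fin n ⊕ Fin n) → ZMod 2) where
  toFun x := x + symp x v • v
  map_add' x y := by
    rw [symp_add_left, add_smul]; abel
  map_smul' c x := by
    simp only [RingHom.id_apply, symp_smul_left, smul_add, smul_smul]
    rw [symp_comm]

lemma tvec_apply (v x : (Fin n ⊕ Fin n) → ZMod 2) :
    tvec v x = x + symp x v • v := rfl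

lemma pi_add_self (x : (Fin n ⊕ Fin n) → ZMod 2) : x + x = 0 := by
  funext r; have : ∀ a : ZMod 2, a + a = 0 := by decide
  exact this (x r)

lemma tvec_invol (v : (Fin n ⊕ Fin n) → ZMod 2) : Function.Involutive (tvec v) := by
  intro x
  rw [tvec_apply, tvec_apply, symp_add_left, symp_smul_left, symp_comm v v, symp_self,
    mul_zero, add_zero, add_assoc, ← add_smul]
  have h2 : symp x v + symp x v = 0 := by
    have : ∀ a : ZMod 2, a + a = 0 := by decide
    exact this _
  rw [h2, zero_smul, add_zero]

lemma tvec_symp (v x y : (Fin n ⊕ Fin n) → ZMod 2) :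
    symp (tvec v x) (tvec v y) = symp x y := by
  simp only [tvec_apply, symp_add_left, symp_add_right, symp_smul_left, symp_smul_right,
    symp_self, mul_zero, add_zero]
  have : ∀ a b c : ZMod 2, a + b * c + c * b = a := by decide
  exact this _ _ _

noncomputable def tvecE (v : (Fin n ⊕ Fin n) → ZMod 2) :
    ((Fin n ⊕ Fin n) → ZMod 2) ≃ₗ[ZMod 2] ((Fin n ⊕ Fin n) → ZMod 2) :=
  LinearEquiv.ofInvolutive (tvec v) (tvec_invol v)

lemma exists_symp_one {u : (Fin n ⊕ Fin n) → ZMod 2} (hu : u ≠ 0) :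
    ∃ w, symp u w = 1 := by
  have : ∃ r, u r ≠ 0 := by
    by_contra h; push_neg at h; exact hu (funext fun r => h r)
  obtain ⟨r, hr⟩ := this
  have hr1 : u r = 1 := by
    have : ∀ a : ZMod 2, a ≠ 0 → a = 1 := by decide
    exact this _ hr
  cases r with
  | inl i =>
    refine ⟨Pi.single (Sum.inr i) 1, ?_⟩
    unfold symp
    rw [Finset.sum_eq_single i]
    · simp [Pi.single_apply, hr1]
    · intro j _ hj
      simp [Pi.single_apply, hj]
    · simp
  | inr i =>
    refine ⟨Pi.single (Sum.inl i) 1, ?_⟩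
    unfold symp
    rw [Finset.sum_eq_single i]
    · simp [Pi.single_apply, hr1]
    · intro j _ hj
      simp [Pi.single_apply, hj]
    · simp

lemma tvecE_apply (v x : (Fin n ⊕ Fin n) → ZMod 2) :
    tvecE v x = x + symp x v • v := rfl

lemma tvecE_symp (v x y : (Fin n ⊕ Fin n) → ZMod 2) :
    symp (tvecE v x) (tvecE v y) = symp x y := tvec_symp v x y

lemma exists_symp_one_one {u v : (Fin n ⊕ Fin n) → ZMod 2} (hu : u ≠ 0) (hv : v ≠ 0) :
    ∃ w, symp u w = 1 ∧ symp v w = 1 := by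
  obtain ⟨w₁, h1⟩ := exists_symp_one hu
  obtain ⟨w₂, h2⟩ := exists_symp_one hv
  by_cases ha : symp v w₁ = 1
  · exact ⟨w₁, h1, ha⟩
  by_cases hb : symp u w₂ = 1
  · exact ⟨w₂, hb, h2⟩
  have z01 : ∀ a : ZMod 2, a ≠ 1 → a = 0 := by decide
  refine ⟨w₁ + w₂, ?_, ?_⟩
  · rw [symp_add_right, h1, z01 _ hb, add_zero]
  · rw [symp_add_right, z01 _ ha, h2, zero_add]

/-- one transvection moving `u` to `v` when `symp u v = 1` -/
lemma tvecE_moves {u v : (Fin n ⊕ Fin n) → ZMod 2} (h : symp u v = 1) :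
    tvecE (u + v) u = v := by
  rw [tvecE_apply, symp_add_right, symp_self, zero_add, h, one_smul,
    ← add_assoc, pi_add_self, zero_add]

lemma exists_sympEquiv {u v : (Fin n ⊕ Fin n) → ZMod 2} (hu : u ≠ 0) (hv : v ≠ 0) :
    ∃ g : ((Fin n ⊕ Fin n) → ZMod 2) ≃ₗ[ZMod 2] ((Fin n ⊕ Fin n) → ZMod 2),
      (∀ x y, symp (g x) (g y) = symp x y) ∧ g u = v := by
  obtain ⟨w, hw1, hw2⟩ := exists_symp_one_one hu hv
  refine ⟨(tvecE (u + w)).trans (tvecE (w + v)), ?_, ?_⟩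
  · intro x y
    simp only [LinearEquiv.trans_apply]
    rw [tvecE_symp, tvecE_symp]
  · simp only [LinearEquiv.trans_apply]
    rw [tvecE_moves hw1, tvecE_moves (by rw [symp_comm]; exact hw2)]

/-- column span of a matrix -/
noncomputable def colSpan (A : Matrix (Fin n ⊕ Fin n) (Fin n) (ZMod 2)) :
    Submodule (ZMod 2) ((Fin n ⊕ Fin n) → ZMod 2) :=
  Submodule.span (ZMod 2) (Set.range fun i : Fin n => fun r => A r i)

lemma colSpan_eq (A : Matrix (Fin n ⊕ Fin n) (Fin n) (ZMod 2)) :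
    colSpan A = Submodule.span (ZMod 2) (Set.range A.col) := rfl

/-- apply a linear equivalence to all columns -/
def mapMat (g : ((Fin n ⊕ Fin n) → ZMod 2) ≃ₗ[ZMod 2] ((Fin n ⊕ Fin n) → ZMod 2))
    (A : Matrix (Fin n ⊕ Fin n) (Fin n) (ZMod 2)) :
    Matrix (Fin n ⊕ Fin n) (Fin n) (ZMod 2) :=
  Matrix.of fun r i => g (fun r' => A r' i) r

lemma mapMat_col (g : ((Fin n ⊕ Fin n) → ZMod 2) ≃ₗ[ZMod 2] ((Fin n ⊕ Fin n) → ZMod 2))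
    (A : Matrix (Fin n ⊕ Fin n) (Fin n) (ZMod 2)) (i : Fin n) :
    (fun r => mapMat g A r i) = g (fun r' => A r' i) := rfl

lemma mapMat_symm (g : ((Fin n ⊕ Fin n) → ZMod 2) ≃ₗ[ZMod 2] ((Fin n ⊕ Fin n) → ZMod 2))
    (A : Matrix (Fin n ⊕ Fin n) (Fin n) (ZMod 2)) :
    mapMat g.symm (mapMat g A) = A := by
  ext r i
  show g.symm (fun r' => mapMat g A r' i) r = A r i
  rw [show (fun r' => mapMat g A r' i) = g (fun r' => A r' i) from rfl,
    LinearEquiv.symm_apply_apply]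

lemma colSpan_mapMat (g : ((Fin n ⊕ Fin n) → ZMod 2) ≃ₗ[ZMod 2] ((Fin n ⊕ Fin n) → ZMod 2))
    (A : Matrix (Fin n ⊕ Fin n) (Fin n) (ZMod 2)) :
    colSpan (mapMat g A) = (colSpan A).map (g : ((Fin n ⊕ Fin n) → ZMod 2) →ₗ[ZMod 2] _) := by
  unfold colSpan
  rw [Submodule.map_span, ← Set.range_comp]
  rfl

lemma mapMat_mem (g : ((Fin n ⊕ Fin n) → ZMod 2) ≃ₗ[ZMod 2] ((Fin n ⊕ Fin n) → ZMod 2))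
    (hg : ∀ x y, symp (g x) (g y) = symp x y)
    (z : (Fin n ⊕ Fin n) → ZMod 2)
    (A : Matrix (Fin n ⊕ Fin n) (Fin n) (ZMod 2))
    (hA : A ∈ (fullRankIso n n).filter fun B => z ∈ colSpan B) :
    mapMat g A ∈ (fullRankIso n n).filter fun B => g z ∈ colSpan B := by
  simp only [Finset.mem_filter, fullRankIso, Finset.mem_univ, true_and] at hA ⊢
  obtain ⟨⟨hrank, hiso⟩, hmem⟩ := hA
  refine ⟨⟨?_, ?_⟩, ?_⟩
  · rw [Matrix.rank_eq_finrank_span_cols, ← colSpan_eq, colSpan_mapMat,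
      LinearEquiv.finrank_map_eq, colSpan_eq, ← Matrix.rank_eq_finrank_span_cols, hrank]
  · intro i j
    rw [mapMat_col, mapMat_col, hg]
    exact hiso i j
  · rw [colSpan_mapMat]
    exact Submodule.mem_map_of_mem hmem

lemma count_eq (g : ((Fin n ⊕ Fin n) → ZMod 2) ≃ₗ[ZMod 2] ((Fin n ⊕ Fin n) → ZMod 2))
    (hg : ∀ x y, symp (g x) (g y) = symp x y) (z : (Fin n ⊕ Fin n) → ZMod 2) :
    ((fullRankIso n n).filter fun A => z ∈ colSpan A).card =
    ((fullRankIso n n).filter fun A => g z ∈ colSpan A).card := by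
  have hg' : ∀ x y, symp (g.symm x) (g.symm y) = symp x y := by
    intro x y
    rw [← hg (g.symm x) (g.symm y), LinearEquiv.apply_symm_apply, LinearEquiv.apply_symm_apply]
  refine Finset.card_bij' (fun A _ => mapMat g A) (fun B _ => mapMat g.symm B)
    (fun A hA => mapMat_mem g hg z A hA) ?_ ?_ ?_
  · intro B hB
    have := mapMat_mem g.symm hg' (g z) B hB
    rwa [LinearEquiv.symm_apply_apply] at this
  · intro A _
    exact mapMat_symm g A
  · intro B _
    have := mapMat_symm g.symm B
    rwa [LinearEquiv.symm_symm] at this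

lemma finrank_colSpan {A : Matrix (Fin n ⊕ Fin n) (Fin n) (ZMod 2)} (hA : A.rank = n) :
    Module.finrank (ZMod 2) (colSpan A) = n := by
  rw [colSpan_eq, ← Matrix.rank_eq_finrank_span_cols, hA]

lemma card_span {A : Matrix (Fin n ⊕ Fin n) (Fin n) (ZMod 2)} (hA : A.rank = n) :
    (Finset.univ.filter fun z : (Fin n ⊕ Fin n) → ZMod 2 => z ∈ colSpan A).card = 2 ^ n := by
  rw [← Fintype.card_subtype]
  have := Module.card_eq_pow_finrank (K := ZMod 2) (V := colSpan A)
  rw [ZMod.card, finrank_colSpan hA] at this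
  convert this using 2
lemma card_span_nz {A : Matrix (Fin n ⊕ Fin n) (Fin n) (ZMod 2)} (hA : A.rank = n) :
    (Finset.univ.filter fun z : (Fin n ⊕ Fin n) → ZMod 2 =>
      z ≠ 0 ∧ z ∈ colSpan A).card = 2 ^ n - 1 := by
  have h1 : (Finset.univ.filter fun z : (Fin n ⊕ Fin n) → ZMod 2 => z ≠ 0 ∧ z ∈ colSpan A)
      = (Finset.univ.filter fun z : (Fin n ⊕ Fin n) → ZMod 2 => z ∈ colSpan A).erase 0 := by
    ext z; simp [Finset.mem_erase, and_comm]
  rw [h1, Finset.card_erase_of_mem, card_span hA]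
  simp [Finset.mem_filter, (colSpan A).zero_mem]

lemma fullRankIso_nonempty : (fullRankIso n n).Nonempty := by
  classical
  refine ⟨Matrix.of fun r i => if r = Sum.inl i then 1 else 0, ?_⟩
  simp only [fullRankIso, Finset.mem_filter, Finset.mem_univ, true_and]
  constructor
  · set A : Matrix (Fin n ⊕ Fin n) (Fin n) (ZMod 2) :=
      Matrix.of fun r i => if r = Sum.inl i then 1 else 0 with hA
    set B : Matrix (Fin n) (Fin n ⊕ Fin n) (ZMod 2) :=
      Matrix.of fun i r => if r = Sum.inl i then 1 else 0 with hB
    have hBA : B * A = 1 := by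
      ext i j
      rw [Matrix.mul_apply]
      rw [Finset.sum_eq_single (Sum.inl i)]
      · simp [hA, hB, Matrix.one_apply, Sum.inl.injEq, eq_comm]
      · intro r _ hr
        simp [hA, hB, hr]
      · simp
    refine le_antisymm ((Matrix.rank_le_card_width A).trans (Fintype.card_fin n).le) ?_
    calc n = (1 : Matrix (Fin n) (Fin n) (ZMod 2)).rank := by rw [Matrix.rank_one, Fintype.card_fin]
    _ = (B * A).rank := by rw [hBA]
    _ ≤ A.rank := Matrix.rank_mul_le_right B A
  · intro i j
    simp [symp, Matrix.of_apply]

lemma count_const {z w : (Fin n ⊕ Fin n) → ZMod 2} (hz : z ≠ 0) (hw : w ≠ 0) :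
    ((fullRankIso n n).filter fun A => z ∈ colSpan A).card =
    ((fullRankIso n n).filter fun A => w ∈ colSpan A).card := by
  obtain ⟨g, hg, hgz⟩ := exists_sympEquiv hz hw
  rw [count_eq g hg z, hgz]

lemma count_mul (hn : 1 ≤ n) {z : (Fin n ⊕ Fin n) → ZMod 2} (hz : z ≠ 0) :
    ((fullRankIso n n).filter fun A => z ∈ colSpan A).card * (2 ^ n + 1)
      = (fullRankIso n n).card := by
  classical
  set S := fullRankIso n n with hS
  set N := (S.filter fun A => z ∈ colSpan A).card with hN
  set Znz := (Finset.univ.filter fun w : (Fin n ⊕ Fin n) → ZMod 2 => w ≠ 0) with hZnz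
  have hswap : ∑ w ∈ Znz, (S.filter fun A => w ∈ colSpan A).card
      = ∑ A ∈ S, (Znz.filter fun w => w ∈ colSpan A).card := by
    simp only [Finset.card_filter]
    rw [Finset.sum_comm]
  have hleft : ∑ w ∈ Znz, (S.filter fun A => w ∈ colSpan A).card = Znz.card * N := by
    rw [Finset.sum_congr rfl fun w hw => ?_, Finset.sum_const, smul_eq_mul]
    rw [hN]
    exact count_const (by simpa [hZnz] using hw) hz
  have hright : ∑ A ∈ S, (Znz.filter fun w => w ∈ colSpan A).card = S.card * (2 ^ n - 1) := by
    rw [Finset.sum_congr rfl fun A hA => ?_, Finset.sum_const, smul_eq_mul]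
    have hrank : A.rank = n := by
      have := hA
      simp only [hS, fullRankIso, Finset.mem_filter] at this
      exact this.2.1
    rw [hZnz, Finset.filter_filter]
    exact card_span_nz hrank
  have hZcard : Znz.card = 2 ^ n * 2 ^ n - 1 := by
    have he : Znz = (Finset.univ : Finset ((Fin n ⊕ Fin n) → ZMod 2)).erase 0 := by
      ext w; simp [hZnz]
    rw [he, Finset.card_erase_of_mem (Finset.mem_univ 0), Finset.card_univ]
    congr 1
    rw [Fintype.card_fun, ZMod.card, Fintype.card_sum, Fintype.card_fin, pow_add]
  -- combine
  have hkey : Znz.card * N = S.card * (2 ^ n - 1) := by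
    rw [← hleft, hswap, hright]
  have hfact : Znz.card = (2 ^ n + 1) * (2 ^ n - 1) := by
    rw [hZcard]
    have h1 : 1 ≤ 2 ^ n := Nat.one_le_two_pow
    obtain ⟨b, hb⟩ : ∃ b, 2 ^ n = b + 1 := ⟨2 ^ n - 1, by omega⟩
    rw [hb]
    simp only [Nat.add_sub_cancel]
    ring_nf
    omega
  have hpos : 0 < 2 ^ n - 1 := by
    have : 2 ≤ 2 ^ n := by
      calc 2 = 2 ^ 1 := (pow_one 2).symm
      _ ≤ 2 ^ n := Nat.pow_le_pow_right (by norm_num) hn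
    omega
  apply Nat.eq_of_mul_eq_mul_right hpos
  calc N * (2 ^ n + 1) * (2 ^ n - 1) = Znz.card * N := by rw [hfact]; ring
  _ = S.card * (2 ^ n - 1) := hkey

lemma hWt_le_card {ι : Type*} [Fintype ι] (z : ι → ZMod 2) : hWt z ≤ Fintype.card ι := by
  classical
  unfold hWt
  exact (Finset.card_filter_le _ _).trans (le_of_eq (Finset.card_univ))

lemma card_hWt_eq {ι : Type*} [Fintype ι] [DecidableEq ι] (k : ℕ) :
    (Finset.univ.filter fun z : ι → ZMod 2 => hWt z = k).card
      = (Fintype.card ι).choose k := by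
  classical
  have hps : (Fintype.card ι).choose k = (Finset.powersetCard k (Finset.univ : Finset ι)).card := by
    rw [Finset.card_powersetCard, Finset.card_univ]
  rw [hps]
  apply Finset.card_bij (fun z _ => Finset.univ.filter fun i => z i ≠ 0)
  · intro z hz
    simp only [Finset.mem_filter, Finset.mem_univ, true_and] at hz
    rw [Finset.mem_powersetCard]
    exact ⟨Finset.subset_univ _, hz⟩
  · intro z₁ h₁ z₂ h₂ h
    funext i
    have : (z₁ i ≠ 0) ↔ (z₂ i ≠ 0) := by
      constructor <;> intro hi
      · have : i ∈ Finset.univ.filter fun j => z₂ j ≠ 0 := by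
          rw [← h]; simp [hi]
        simpa using this
      · have : i ∈ Finset.univ.filter fun j => z₁ j ≠ 0 := by
          rw [h]; simp [hi]
        simpa using this
    have h2 : ∀ a b : ZMod 2, ((a ≠ 0) ↔ (b ≠ 0)) → a = b := by decide
    exact h2 _ _ this
  · intro s hs
    rw [Finset.mem_powersetCard] at hs
    refine ⟨fun i => if i ∈ s then 1 else 0, ?_, ?_⟩
    · rw [Finset.mem_filter]; refine ⟨Finset.mem_univ _, ?_⟩; unfold hWt
      rw [← hs.2]
      congr 1
      ext i
      by_cases hi : i ∈ s <;> simp [hi]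
    · ext i
      by_cases hi : i ∈ s <;> simp [hi]

lemma card_hWt_le_ball {ι : Type*} [Fintype ι] [DecidableEq ι] (t : ℝ) :
    (Finset.univ.filter fun z : ι → ZMod 2 => ((hWt z : ℝ) ≤ t)).card
      = ∑ k ∈ Finset.range (Fintype.card ι + 1),
          if (k : ℝ) ≤ t then (Fintype.card ι).choose k else 0 := by
  classical
  rw [Finset.card_eq_sum_card_fiberwise
    (f := fun z : ι → ZMod 2 => hWt z) (t := Finset.range (Fintype.card ι + 1))
    (fun z _ => Finset.mem_range.mpr (Nat.lt_succ_of_le (hWt_le_card z)))]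
  apply Finset.sum_congr rfl
  intro k _
  by_cases hk : (k : ℝ) ≤ t
  · rw [if_pos hk, ← card_hWt_eq (ι := ι) k]
    congr 1
    ext z
    simp only [Finset.mem_filter, Finset.mem_univ, true_and]
    constructor
    · exact fun h => h.2
    · intro h; exact ⟨by rw [h]; exact hk, h⟩
  · rw [if_neg hk]
    rw [Finset.card_eq_zero]
    ext z
    simp only [Finset.mem_filter, Finset.mem_univ, true_and, Finset.notMem_empty, iff_false]
    rintro ⟨h1, h2⟩
    exact hk (h2 ▸ h1)

lemma sum_choose_le (m : ℕ) (p : ℝ) (hp : 0 < p) (hp2 : p ≤ 1/2) :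
    (∑ k ∈ Finset.range (m + 1), if (k : ℝ) ≤ p * m then ((m.choose k : ℝ)) else 0)
      ≤ (2 : ℝ) ^ ((m : ℝ) * binEnt p) := by
  set q : ℝ := 1 - p with hqdef
  have hq : 0 < q := by rw [hqdef]; linarith
  have hp1 : p < 1 := by linarith
  have hpq : p ≤ q := by rw [hqdef]; linarith
  set C : ℝ := p ^ (p * m) * q ^ (q * m) with hC
  have hCpos : 0 < C := mul_pos (Real.rpow_pos_of_pos hp _) (Real.rpow_pos_of_pos hq _)
  -- pointwise bound
  have hpoint : ∀ k : ℕ, k ≤ m → (k : ℝ) ≤ p * m → C ≤ p ^ k * q ^ (m - k) := by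
    intro k hk hkp
    have hcast : ((m - k : ℕ) : ℝ) = (m : ℝ) - k := by
      push_cast [Nat.cast_sub hk]; ring
    have h1 : p ^ k * q ^ (m - k) = p ^ (k : ℝ) * q ^ ((m : ℝ) - (k : ℝ)) := by
      rw [← Real.rpow_natCast p k, ← Real.rpow_natCast q (m - k), hcast]
    have h2 : C = p ^ (p * m) * q ^ ((m : ℝ) - p * m) := by
      rw [hC]
      congr 2
      rw [hqdef]; ring
    rw [h1, h2]
    have hrepr : ∀ x : ℝ, p ^ x * q ^ ((m : ℝ) - x) = (p / q) ^ x * q ^ (m : ℝ) := by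
      intro x
      rw [Real.div_rpow hp.le hq.le, Real.rpow_sub hq]
      field_simp
    rw [hrepr, hrepr]
    apply mul_le_mul_of_nonneg_right _ (Real.rpow_nonneg hq.le _)
    apply Real.rpow_le_rpow_of_exponent_ge (div_pos hp hq) (div_le_one_of_le₀ hpq hq.le) hkp
  -- binomial theorem
  have hbinom : ∑ k ∈ Finset.range (m + 1), p ^ k * q ^ (m - k) * (m.choose k : ℝ) = 1 := by
    rw [← add_pow p q m, hqdef]
    norm_num
  have hsumle : C * (∑ k ∈ Finset.range (m + 1),
      if (k : ℝ) ≤ p * m then ((m.choose k : ℝ)) else 0) ≤ 1 := by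
    rw [Finset.mul_sum, ← hbinom]
    apply Finset.sum_le_sum
    intro k hk
    rw [Finset.mem_range] at hk
    by_cases hkp : (k : ℝ) ≤ p * m
    · rw [if_pos hkp]
      rw [mul_comm (p ^ k * q ^ (m - k)) _, mul_comm C _]
      exact mul_le_mul_of_nonneg_left (hpoint k (Nat.lt_succ_iff.mp hk) hkp)
        (Nat.cast_nonneg _)
    · rw [if_neg hkp, mul_zero]
      positivity
  have hCinv : C⁻¹ = (2 : ℝ) ^ ((m : ℝ) * binEnt p) := by
    have hexp : (m : ℝ) * binEnt p = Real.logb 2 p * (-(p * m)) + Real.logb 2 q * (-(q * m)) := by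
      rw [binEnt, hqdef]; ring
    rw [hexp, Real.rpow_add (by norm_num : (0:ℝ) < 2),
      Real.rpow_mul (by norm_num : (0:ℝ) ≤ 2), Real.rpow_mul (by norm_num : (0:ℝ) ≤ 2),
      Real.rpow_logb (by norm_num) (by norm_num) hp,
      Real.rpow_logb (by norm_num) (by norm_num) hq,
      Real.rpow_neg hp.le, Real.rpow_neg hq.le, hC, mul_inv]
  rw [← hCinv, ← one_div C, le_div_iff₀ hCpos, mul_comm]
  exact hsumle

end Aux

/-- The column span of a uniformly random full-rank isotropic matrix `A ∈ F₂^{2n×n}`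
contains a nonzero vector of Hamming weight at most `δ·n` with probability at most
`2^{2n·H₂(δ/2)}/(2ⁿ + 1)`, and in particular at most `2^{-n(1 - 2H₂(δ/2))}`. -/
theorem stmt5 (n : ℕ) (hn : 1 ≤ n) (δ : ℝ) (hδ0 : 0 < δ) (hδ1 : δ ≤ 1) :
    badProb n δ ≤ (2 : ℝ) ^ ((2 * (n : ℝ)) * binEnt (δ / 2)) / ((2 : ℝ) ^ (n : ℕ) + 1) ∧
    badProb n δ ≤ (2 : ℝ) ^ (-(n : ℝ) * (1 - 2 * binEnt (δ / 2))) := by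
  classical
  have hS := fullRankIso_nonempty (n := n)
  set S := fullRankIso n n with hSdef
  have hScard : (0:ℝ) < (S.card : ℝ) := by exact_mod_cast Finset.card_pos.mpr hS
  have hpow : (0:ℝ) < (2:ℝ) ^ (n:ℕ) + 1 := by positivity
  set Zlow := Finset.univ.filter
    (fun z : (Fin n ⊕ Fin n) → ZMod 2 => z ≠ 0 ∧ (hWt z : ℝ) ≤ δ * n) with hZdef
  set bad := S.filter (fun A => ∃ z : (Fin n ⊕ Fin n) → ZMod 2, z ≠ 0 ∧
        z ∈ Submodule.span (ZMod 2) (Set.range fun i : Fin n => fun r => A r i) ∧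
        (hWt z : ℝ) ≤ δ * n) with hbad
  have hbadProb : badProb n δ = (bad.card : ℝ) / (S.card : ℝ) := rfl
  have hsub : bad ⊆ Zlow.biUnion (fun z => S.filter fun A => z ∈ colSpan A) := by
    intro A hA
    rw [hbad, Finset.mem_filter] at hA
    obtain ⟨hAS, z, hz0, hzm, hzw⟩ := hA
    rw [Finset.mem_biUnion]
    exact ⟨z, by simp [hZdef, hz0, hzw], by
      rw [Finset.mem_filter]; exact ⟨hAS, hzm⟩⟩
  have hcount : ∀ z ∈ Zlow, ((S.filter fun A => z ∈ colSpan A).card : ℝ)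
      = (S.card : ℝ) / ((2:ℝ) ^ (n:ℕ) + 1) := by
    intro z hz
    rw [hZdef, Finset.mem_filter] at hz
    have h := count_mul hn hz.2.1
    have hcast : ((S.filter fun A => z ∈ colSpan A).card : ℝ) * ((2:ℝ)^(n:ℕ) + 1)
        = (S.card : ℝ) := by exact_mod_cast congrArg (Nat.cast : ℕ → ℝ) h
    rw [eq_div_iff (ne_of_gt hpow)]
    exact hcast
  have hbound1 : (bad.card : ℝ) ≤ (Zlow.card : ℝ) * ((S.card : ℝ) / ((2:ℝ)^(n:ℕ)+1)) := by
    have h1 : bad.card ≤ ∑ z ∈ Zlow, (S.filter fun A => z ∈ colSpan A).card :=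
      (Finset.card_le_card hsub).trans Finset.card_biUnion_le
    have h2 : ((∑ z ∈ Zlow, (S.filter fun A => z ∈ colSpan A).card : ℕ) : ℝ)
        = (Zlow.card : ℝ) * ((S.card : ℝ) / ((2:ℝ)^(n:ℕ)+1)) := by
      rw [Nat.cast_sum, Finset.sum_congr rfl hcount, Finset.sum_const, nsmul_eq_mul]
    calc (bad.card:ℝ) ≤ ((∑ z ∈ Zlow, (S.filter fun A => z ∈ colSpan A).card : ℕ) : ℝ) := by
          exact_mod_cast h1
    _ = _ := h2
  have hmain : badProb n δ ≤ (Zlow.card : ℝ) / ((2:ℝ)^(n:ℕ)+1) := by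
    rw [hbadProb, div_le_iff₀ hScard]
    calc (bad.card:ℝ) ≤ (Zlow.card : ℝ) * ((S.card : ℝ) / ((2:ℝ)^(n:ℕ)+1)) := hbound1
    _ = (Zlow.card : ℝ) / ((2:ℝ)^(n:ℕ)+1) * S.card := by ring
  have hZball : (Zlow.card : ℝ) ≤ (2:ℝ) ^ ((2*(n:ℝ)) * binEnt (δ/2)) := by
    have hsub2 : Zlow ⊆ Finset.univ.filter
        (fun z : (Fin n ⊕ Fin n) → ZMod 2 => (hWt z : ℝ) ≤ δ * n) := by
      intro z hz; rw [hZdef, Finset.mem_filter] at hz; rw [Finset.mem_filter]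
      exact ⟨hz.1, hz.2.2⟩
    have h1 : Zlow.card ≤ ∑ k ∈ Finset.range (Fintype.card (Fin n ⊕ Fin n) + 1),
        if (k : ℝ) ≤ δ * n then (Fintype.card (Fin n ⊕ Fin n)).choose k else 0 := by
      rw [← card_hWt_le_ball (δ * n)]
      exact Finset.card_le_card hsub2
    have hci : Fintype.card (Fin n ⊕ Fin n) = n + n := by simp
    rw [hci] at h1
    have hmn : (δ:ℝ) * n = (δ/2) * ((n+n : ℕ) : ℝ) := by push_cast; ring
    have h2 := sum_choose_le (n+n) (δ/2) (by linarith) (by linarith)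
    have h3 : ((∑ k ∈ Finset.range (n+n+1),
          if (k : ℝ) ≤ δ * n then ((n+n).choose k) else 0 : ℕ) : ℝ)
        = ∑ k ∈ Finset.range (n+n+1),
          if (k:ℝ) ≤ (δ/2) * ((n+n:ℕ):ℝ) then (((n+n).choose k : ℝ)) else 0 := by
      rw [Nat.cast_sum]
      apply Finset.sum_congr rfl
      intro k _
      rw [← hmn]
      split_ifs <;> simp
    have h4 : ((n+n:ℕ):ℝ) * binEnt (δ/2) = (2*(n:ℝ)) * binEnt (δ/2) := by push_cast; ring
    calc (Zlow.card : ℝ) ≤ ((∑ k ∈ Finset.range (n+n+1),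
          if (k : ℝ) ≤ δ * n then ((n+n).choose k) else 0 : ℕ) : ℝ) := by exact_mod_cast h1
    _ = ∑ k ∈ Finset.range (n+n+1),
          if (k:ℝ) ≤ (δ/2) * ((n+n:ℕ):ℝ) then (((n+n).choose k : ℝ)) else 0 := h3
    _ ≤ (2:ℝ) ^ (((n+n:ℕ):ℝ) * binEnt (δ/2)) := h2
    _ = (2:ℝ) ^ ((2*(n:ℝ)) * binEnt (δ/2)) := by rw [h4]
  have hconc1 : badProb n δ ≤ (2 : ℝ) ^ ((2 * (n : ℝ)) * binEnt (δ / 2)) / ((2 : ℝ) ^ (n : ℕ) + 1) := by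
    refine hmain.trans ?_
    gcongr
  refine ⟨hconc1, ?_⟩
  have h5 : (2:ℝ)^((2*(n:ℝ))*binEnt (δ/2)) / ((2:ℝ)^(n:ℕ)+1)
      ≤ (2:ℝ)^((2*(n:ℝ))*binEnt (δ/2)) / (2:ℝ)^(n:ℕ) := by
    gcongr
    linarith
  have h6 : (2:ℝ)^((2*(n:ℝ))*binEnt (δ/2)) / (2:ℝ)^(n:ℕ)
      = (2:ℝ)^(-(n:ℝ)*(1-2*binEnt (δ/2))) := by
    rw [← Real.rpow_natCast 2 n, ← Real.rpow_sub (by norm_num : (0:ℝ) < 2)]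
    congr 1; ring
  linarith
end
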